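/- Let n be a real number with n ≠ 2. For every L > 0, every positive integer N with h = L/N, and every N-periodic sequence u with u_i > 0 for all i, there exist real numbers ξ_i with min(u_{i−1}, u_i) ≤ ξ_i ≤ max(u_{i−1}, u_i) for every i, such that A_Δ^h(u, 1) + B_Δ^h(u, 1) = −(5(n−2)/12) h Σ_i ( u_i^{n−3} + u_{i−1}^{n−3} ) D_i² − ((n−2)/12) h Σ_i ( u_{i+1}^{n−3} + u_i^{n−3} ) D_i² − ((n−2)/12) h Σ_i ( u_{i+1}^{n−3} + 2 u_i^{n−3} + u_{i−1}^{n−3} ) · ((u_{i+1} − 2u_i + u_{i−1})/h²) · (u_i − u_{i−1}) + (n−2) h Σ_i ξ_i^{n−3} D_i², where D_i := (u_i − u_{i−1})/h and A_Δ^h(u,1), B_Δ^h(u,1) denote A_Δ^h(u, v), B_Δ^h(u, v) with v_i = 1 for all i. -/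

import Mathlib

open Finset

/-- Forward difference quotient `d_i = (u_{i+1} - u_i)/h`. -/
noncomputable def dq (h : ℝ) (u : ℤ → ℝ) (i : ℤ) : ℝ := (u (i + 1) - u i) / h

/-- Discrete Laplacian `(Δ_h u)_i = (u_{i+1} - 2u_i + u_{i-1})/h²`. -/
noncomputable def lap (h : ℝ) (u : ℤ → ℝ) (i : ℤ) : ℝ :=
  (u (i + 1) - 2 * u i + u (i - 1)) / h ^ 2

/-- The discrete operator `A_Δ^h(u,v)`. -/
noncomputable def Adelta (n h : ℝ) (N : ℕ) (u v : ℤ → ℝ) : ℝ :=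
  -((n - 2) / 6) * h * (∑ i ∈ Icc (1 : ℤ) (N : ℤ),
      u i ^ (n - 3) * ((dq h u (i - 1)) ^ 2 + (dq h u i) ^ 2) * v i)
  - (n - 2) / 6 * h * (∑ i ∈ Icc (1 : ℤ) (N : ℤ),
      ((u i ^ (n - 3) + u (i + 1) ^ (n - 3)) * dq h u i
        + (u (i - 1) ^ (n - 3) + u i ^ (n - 3)) * dq h u (i - 1))
      * ((u (i + 1) - u (i - 1)) / (2 * h)) * v i)

/-- The discrete operator `B_Δ^h(u,v) = -h Σ_i u_i^{n-2} (Δ_h u)_i v_i`. -/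
noncomputable def Bdelta (n h : ℝ) (N : ℕ) (u v : ℤ → ℝ) : ℝ :=
  -(h * ∑ i ∈ Icc (1 : ℤ) (N : ℤ), u i ^ (n - 2) * lap h u i * v i)


lemma sum_shift (N : ℕ) (hN : 0 < N) (g : ℤ → ℝ) (hg : ∀ i : ℤ, g (i + N) = g i) :
    ∑ i ∈ Icc (1 : ℤ) (N : ℤ), g (i + 1) = ∑ i ∈ Icc (1 : ℤ) (N : ℤ), g i := by
  have hN1 : (1 : ℤ) ≤ N := by exact_mod_cast hN
  have h1 : ∑ i ∈ Icc (1 : ℤ) (N : ℤ), g (i + 1) = ∑ i ∈ Icc (2 : ℤ) ((N : ℤ) + 1), g i := by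
    rw [show (Icc (2 : ℤ) ((N : ℤ) + 1)) = (Icc (1 : ℤ) (N : ℤ)).map (addRightEmbedding 1) by
      rw [Finset.map_add_right_Icc]; norm_num]
    rw [Finset.sum_map]
    rfl
  have h2 : Icc (2 : ℤ) ((N : ℤ) + 1) = insert ((N : ℤ) + 1) (Icc (2 : ℤ) (N : ℤ)) := by
    ext x; simp only [mem_Icc, mem_insert]; omega
  have h3 : Icc (1 : ℤ) (N : ℤ) = insert (1 : ℤ) (Icc (2 : ℤ) (N : ℤ)) := by
    ext x; simp only [mem_Icc, mem_insert]; omega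
  rw [h1, h2, h3, Finset.sum_insert (by simp only [mem_Icc]; omega),
    Finset.sum_insert (by simp only [mem_Icc]; omega)]
  have : g ((N : ℤ) + 1) = g 1 := by rw [show (N : ℤ) + 1 = 1 + (N : ℤ) by ring, hg]
  rw [this]

lemma mvt_aux (n : ℝ) (a b : ℝ) (ha : 0 < a) (hab : a < b) :
    ∃ ξ, a ≤ ξ ∧ ξ ≤ b ∧ b ^ (n - 2) - a ^ (n - 2) = (n - 2) * ξ ^ (n - 3) * (b - a) := by
  have hderiv : ∀ x ∈ Set.Ioo a b, HasDerivAt (fun x : ℝ => x ^ (n - 2))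
      ((n - 2) * x ^ (n - 3)) x := by
    intro x hx
    have hx0 : x ≠ 0 := ne_of_gt (lt_trans ha hx.1)
    have := Real.hasDerivAt_rpow_const (x := x) (p := n - 2) (Or.inl hx0)
    simpa [show n - 2 - 1 = n - 3 by ring] using this
  have hcont : ContinuousOn (fun x : ℝ => x ^ (n - 2)) (Set.Icc a b) := by
    intro x hx
    have hx0 : x ≠ 0 := ne_of_gt (lt_of_lt_of_le ha hx.1)
    exact ((Real.hasDerivAt_rpow_const (x := x) (p := n - 2)
      (Or.inl hx0)).continuousAt).continuousWithinAt
  obtain ⟨c, hc, hceq⟩ := exists_hasDerivAt_eq_slope (fun x : ℝ => x ^ (n - 2))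
    (fun x => (n - 2) * x ^ (n - 3)) hab hcont hderiv
  refine ⟨c, le_of_lt hc.1, le_of_lt hc.2, ?_⟩
  have hba : b - a ≠ 0 := sub_ne_zero.2 (ne_of_gt hab)
  field_simp at hceq
  linarith [hceq]

lemma mvt_pow (n : ℝ) (a b : ℝ) (ha : 0 < a) (hb : 0 < b) :
    ∃ ξ, min a b ≤ ξ ∧ ξ ≤ max a b ∧
      b ^ (n - 2) - a ^ (n - 2) = (n - 2) * ξ ^ (n - 3) * (b - a) := by
  rcases lt_trichotomy a b with hab | hab | hab
  · obtain ⟨ξ, h1, h2, h3⟩ := mvt_aux n a b ha hab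
    exact ⟨ξ, le_trans (min_le_left _ _) h1, le_trans h2 (le_max_right _ _), h3⟩
  · exact ⟨a, by simp [hab], by simp [hab], by simp [hab]⟩
  · obtain ⟨ξ, h1, h2, h3⟩ := mvt_aux n b a hb hab
    refine ⟨ξ, le_trans (min_le_right _ _) h1, le_trans h2 (le_max_left _ _), by linarith⟩

/-- representation of `A_Δ^h(u,1) + B_Δ^h(u,1)` with intermediate
values `ξ_i ∈ [min(u_{i-1},u_i), max(u_{i-1},u_i)]`. -/
theorem statement10 (n : ℝ) (hn : n ≠ 2) (L : ℝ) (hL : 0 < L) (N : ℕ) (hN : 0 < N)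
    (h : ℝ) (hh : h = L / N)
    (u : ℤ → ℝ) (hper : ∀ i : ℤ, u (i + (N : ℤ)) = u i) (hpos : ∀ i : ℤ, 0 < u i) :
    ∃ ξ : ℤ → ℝ,
      (∀ i : ℤ, min (u (i - 1)) (u i) ≤ ξ i ∧ ξ i ≤ max (u (i - 1)) (u i)) ∧
      Adelta n h N u (fun _ => 1) + Bdelta n h N u (fun _ => 1) =
        -(5 * (n - 2) / 12) * h * (∑ i ∈ Icc (1 : ℤ) (N : ℤ),
            (u i ^ (n - 3) + u (i - 1) ^ (n - 3)) * ((u i - u (i - 1)) / h) ^ 2)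
        - (n - 2) / 12 * h * (∑ i ∈ Icc (1 : ℤ) (N : ℤ),
            (u (i + 1) ^ (n - 3) + u i ^ (n - 3)) * ((u i - u (i - 1)) / h) ^ 2)
        - (n - 2) / 12 * h * (∑ i ∈ Icc (1 : ℤ) (N : ℤ),
            (u (i + 1) ^ (n - 3) + 2 * u i ^ (n - 3) + u (i - 1) ^ (n - 3))
              * ((u (i + 1) - 2 * u i + u (i - 1)) / h ^ 2) * (u i - u (i - 1)))
        + (n - 2) * h * (∑ i ∈ Icc (1 : ℤ) (N : ℤ),
            ξ i ^ (n - 3) * ((u i - u (i - 1)) / h) ^ 2) := by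
  choose ξ hξmin hξmax hξeq using fun i : ℤ => mvt_pow n (u (i-1)) (u i) (hpos _) (hpos _)
  refine ⟨ξ, fun i => ⟨hξmin i, hξmax i⟩, ?_⟩
  simp only [Adelta, Bdelta]
  have hh0 : h ≠ 0 := by
    rw [hh]
    have : (0:ℝ) < (N:ℝ) := by exact_mod_cast hN
    positivity
  have hn2 : n - 2 ≠ 0 := sub_ne_zero.2 hn
  have hidx : ∀ i : ℤ, i - 1 + 1 = i := fun i => by ring
  have hdq : ∀ i : ℤ, dq h u (i - 1) = (u i - u (i - 1)) / h := fun i => by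
    simp only [dq, hidx]
  have hperp : ∀ i : ℤ, u (i + (N:ℤ) + 1) = u (i + 1) := fun i => by
    rw [show i + (N:ℤ) + 1 = (i + 1) + (N:ℤ) by ring, hper]
  have hperm : ∀ i : ℤ, u (i + (N:ℤ) - 1) = u (i - 1) := fun i => by
    rw [show i + (N:ℤ) - 1 = (i - 1) + (N:ℤ) by ring, hper]
  have shiftm : ∀ g : ℤ → ℝ, (∀ i : ℤ, g (i + N) = g i) →
      ∑ i ∈ Icc (1:ℤ) (N:ℤ), g i = ∑ i ∈ Icc (1:ℤ) (N:ℤ), g (i - 1) := by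
    intro g hg
    have := sum_shift N hN (fun i => g (i - 1)) (fun i => by
      rw [show i + (N:ℤ) - 1 = (i - 1) + (N:ℤ) by ring, hg])
    simpa using this
  set P := ∑ i ∈ Icc (1:ℤ) (N:ℤ),
      (u i ^ (n-3) + u (i-1) ^ (n-3)) * ((u i - u (i-1)) / h) ^ 2 with hP
  set R := ∑ i ∈ Icc (1:ℤ) (N:ℤ),
      (u (i+1) ^ (n-3) + u i ^ (n-3)) * ((u i - u (i-1)) / h) ^ 2 with hR
  set Q := ∑ i ∈ Icc (1:ℤ) (N:ℤ),
      (u (i+1) ^ (n-3) + 2 * u i ^ (n-3) + u (i-1) ^ (n-3)) *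
        (((u i - u (i-1)) / h) * ((u (i+1) - u i) / h)) with hQ
  set M := ∑ i ∈ Icc (1:ℤ) (N:ℤ),
      (u i ^ (n-2) - u (i-1) ^ (n-2)) * (u i - u (i-1)) with hM
  -- first A-sum
  have e1 : ∑ i ∈ Icc (1:ℤ) (N:ℤ),
      u i ^ (n-3) * ((dq h u (i-1)) ^ 2 + (dq h u i) ^ 2) * 1 = P := by
    have s1 : ∑ i ∈ Icc (1:ℤ) (N:ℤ), u i ^ (n-3) * (dq h u i) ^ 2
        = ∑ i ∈ Icc (1:ℤ) (N:ℤ), u (i-1) ^ (n-3) * (dq h u (i-1)) ^ 2 := by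
      have := shiftm (fun i => u i ^ (n-3) * (dq h u i) ^ 2) (fun i => by
        simp only [dq]; rw [hperp, hper])
      simpa using this
    calc ∑ i ∈ Icc (1:ℤ) (N:ℤ), u i ^ (n-3) * ((dq h u (i-1)) ^ 2 + (dq h u i) ^ 2) * 1
        = ∑ i ∈ Icc (1:ℤ) (N:ℤ),
            (u i ^ (n-3) * (dq h u (i-1)) ^ 2 + u i ^ (n-3) * (dq h u i) ^ 2) := by
          apply Finset.sum_congr rfl; intro i _; ring
      _ = (∑ i ∈ Icc (1:ℤ) (N:ℤ), u i ^ (n-3) * (dq h u (i-1)) ^ 2)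
          + ∑ i ∈ Icc (1:ℤ) (N:ℤ), u i ^ (n-3) * (dq h u i) ^ 2 :=
          Finset.sum_add_distrib
      _ = (∑ i ∈ Icc (1:ℤ) (N:ℤ), u i ^ (n-3) * (dq h u (i-1)) ^ 2)
          + ∑ i ∈ Icc (1:ℤ) (N:ℤ), u (i-1) ^ (n-3) * (dq h u (i-1)) ^ 2 := by rw [s1]
      _ = ∑ i ∈ Icc (1:ℤ) (N:ℤ),
            (u i ^ (n-3) * (dq h u (i-1)) ^ 2 + u (i-1) ^ (n-3) * (dq h u (i-1)) ^ 2) :=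
          Finset.sum_add_distrib.symm
      _ = P := by
          rw [hP]; apply Finset.sum_congr rfl; intro i _; rw [hdq]; ring
  -- second A-sum
  have e2 : ∑ i ∈ Icc (1:ℤ) (N:ℤ),
      ((u i ^ (n-3) + u (i+1) ^ (n-3)) * dq h u i
        + (u (i-1) ^ (n-3) + u i ^ (n-3)) * dq h u (i-1))
      * ((u (i+1) - u (i-1)) / (2 * h)) * 1 = P + Q / 2 := by
    have s1 : ∑ i ∈ Icc (1:ℤ) (N:ℤ), (u i ^ (n-3) + u (i+1) ^ (n-3)) * (dq h u i) ^ 2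
        = ∑ i ∈ Icc (1:ℤ) (N:ℤ),
            (u (i-1) ^ (n-3) + u i ^ (n-3)) * (dq h u (i-1)) ^ 2 := by
      have := shiftm (fun i => (u i ^ (n-3) + u (i+1) ^ (n-3)) * (dq h u i) ^ 2) (fun i => by
        simp only [dq]; rw [hperp, hper])
      simpa using this
    calc ∑ i ∈ Icc (1:ℤ) (N:ℤ),
          ((u i ^ (n-3) + u (i+1) ^ (n-3)) * dq h u i
            + (u (i-1) ^ (n-3) + u i ^ (n-3)) * dq h u (i-1))
          * ((u (i+1) - u (i-1)) / (2 * h)) * 1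
        = ∑ i ∈ Icc (1:ℤ) (N:ℤ),
            ((1:ℝ)/2 * ((u i ^ (n-3) + u (i+1) ^ (n-3)) * (dq h u i) ^ 2)
             + ((1:ℝ)/2 * ((u (i+1) ^ (n-3) + 2 * u i ^ (n-3) + u (i-1) ^ (n-3))
                  * (dq h u (i-1) * dq h u i))
               + (1:ℝ)/2 * ((u (i-1) ^ (n-3) + u i ^ (n-3)) * (dq h u (i-1)) ^ 2))) := by
          apply Finset.sum_congr rfl; intro i _
          rw [hdq]; simp only [dq]
          have hu : u (i+1) - u (i-1) = ((u (i+1) - u i) / h) * h + ((u i - u (i-1)) / h) * h := by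
            field_simp; ring
          rw [hu]; field_simp; ring
      _ = (∑ i ∈ Icc (1:ℤ) (N:ℤ),
            (1:ℝ)/2 * ((u i ^ (n-3) + u (i+1) ^ (n-3)) * (dq h u i) ^ 2))
          + ((∑ i ∈ Icc (1:ℤ) (N:ℤ),
            (1:ℝ)/2 * ((u (i+1) ^ (n-3) + 2 * u i ^ (n-3) + u (i-1) ^ (n-3))
                  * (dq h u (i-1) * dq h u i)))
            + ∑ i ∈ Icc (1:ℤ) (N:ℤ),
            (1:ℝ)/2 * ((u (i-1) ^ (n-3) + u i ^ (n-3)) * (dq h u (i-1)) ^ 2)) := by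
          rw [Finset.sum_add_distrib, Finset.sum_add_distrib]
      _ = P + Q / 2 := by
          rw [← Finset.mul_sum, ← Finset.mul_sum, ← Finset.mul_sum, s1]
          have c1 : ∑ i ∈ Icc (1:ℤ) (N:ℤ),
              (u (i-1) ^ (n-3) + u i ^ (n-3)) * (dq h u (i-1)) ^ 2 = P := by
            rw [hP]; apply Finset.sum_congr rfl; intro i _; rw [hdq]; ring
          have c2 : ∑ i ∈ Icc (1:ℤ) (N:ℤ),
              (u (i+1) ^ (n-3) + 2 * u i ^ (n-3) + u (i-1) ^ (n-3))
                * (dq h u (i-1) * dq h u i) = Q := by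
            rw [hQ]; apply Finset.sum_congr rfl; intro i _; rw [hdq]; simp only [dq]
          rw [c1, c2]; ring
  -- B-sum
  have eB : ∑ i ∈ Icc (1:ℤ) (N:ℤ), u i ^ (n-2) * lap h u i * 1 = -(M / h ^ 2) := by
    have s1 : ∑ i ∈ Icc (1:ℤ) (N:ℤ), u i ^ (n-2) * (u (i+1) - u i) / h ^ 2
        = ∑ i ∈ Icc (1:ℤ) (N:ℤ), u (i-1) ^ (n-2) * (u i - u (i-1)) / h ^ 2 := by
      have := shiftm (fun i => u i ^ (n-2) * (u (i+1) - u i) / h ^ 2) (fun i => by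
        rw [hperp, hper])
      simpa using this
    calc ∑ i ∈ Icc (1:ℤ) (N:ℤ), u i ^ (n-2) * lap h u i * 1
        = (∑ i ∈ Icc (1:ℤ) (N:ℤ), u i ^ (n-2) * (u (i+1) - u i) / h ^ 2)
          + ∑ i ∈ Icc (1:ℤ) (N:ℤ), -(u i ^ (n-2) * (u i - u (i-1)) / h ^ 2) := by
          rw [← Finset.sum_add_distrib]
          apply Finset.sum_congr rfl; intro i _; simp only [lap]; ring
      _ = (∑ i ∈ Icc (1:ℤ) (N:ℤ), u (i-1) ^ (n-2) * (u i - u (i-1)) / h ^ 2)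
          + ∑ i ∈ Icc (1:ℤ) (N:ℤ), -(u i ^ (n-2) * (u i - u (i-1)) / h ^ 2) := by rw [s1]
      _ = ∑ i ∈ Icc (1:ℤ) (N:ℤ),
            -((u i ^ (n-2) - u (i-1) ^ (n-2)) * (u i - u (i-1)) / h ^ 2) := by
          rw [← Finset.sum_add_distrib]
          apply Finset.sum_congr rfl; intro i _; ring
      _ = -(M / h ^ 2) := by
          rw [hM, Finset.sum_div, ← Finset.sum_neg_distrib]
  -- third RHS sum
  have eC : ∑ i ∈ Icc (1:ℤ) (N:ℤ),
      (u (i+1) ^ (n-3) + 2 * u i ^ (n-3) + u (i-1) ^ (n-3))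
        * ((u (i+1) - 2 * u i + u (i-1)) / h ^ 2) * (u i - u (i-1)) = Q - R - P := by
    rw [hQ, hR, hP, ← Finset.sum_sub_distrib, ← Finset.sum_sub_distrib]
    apply Finset.sum_congr rfl; intro i _
    field_simp; ring
  -- ξ-sum
  have eX : ∑ i ∈ Icc (1:ℤ) (N:ℤ), ξ i ^ (n-3) * ((u i - u (i-1)) / h) ^ 2
      = M / ((n-2) * h ^ 2) := by
    rw [hM, Finset.sum_div]
    apply Finset.sum_congr rfl; intro i _
    rw [hξeq i]
    field_simp
  rw [e1, e2, eB, eC, eX]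
  field_simp
  ring
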